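/- arXiv:math/0411152 — 4 statements merged into one kernel-verified Lean document; each statement's English description precedes it below -/
import Mathlib

section
/- Let H be a group with center Z and let pr : H → H/Z be the canonical projection. Let P and Q be subgroups of H such that pr(P) ⊇ pr(Q). If Q has no nontrivial abelian quotient (equivalently, Q equals its own commutator subgroup), then P ⊇ Q. -/
/-!
Modulo the center, `Q` lies in `P`: every element of `Q` is `p * z` with `p ∈ P` and `z` central.
Central factors do not change commutators, so every commutator of elements of `Q` is a commutator
of elements of `P`. Since `Q` is perfect, it is generated by these commutators, hence `Q ≤ P`.
-/

open Subgroup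
open scoped commutatorElement

section CenterCommutator

variable {G : Type*} [Group G]

theorem commutatorElement_mul_left_of_mem_center (a b : G) {z : G} (hz : z ∈ center G) :
    ⁅a * z, b⁆ = ⁅a, b⁆ := by
  have hzb : ⁅z, b⁆ = 1 := commutatorElement_eq_one_iff_mul_comm.mpr (mem_center_iff.mp hz b).symm
  rw [commutatorElement_mul_left_eq_conj_mul, hzb, mul_one, mul_inv_cancel, one_mul]

theorem commutatorElement_mul_right_of_mem_center (a b : G) {z : G} (hz : z ∈ center G) :
    ⁅a, b * z⁆ = ⁅a, b⁆ := by
  have haz : ⁅a, z⁆ = 1 := commutatorElement_eq_one_iff_mul_comm.mpr (mem_center_iff.mp hz a)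
  rw [commutatorElement_mul_right_eq_mul_conj, haz, mul_one, mul_assoc, mul_inv_cancel, mul_one]

theorem Subgroup.commutator_le_commutator_of_le_sup_center {H₁ H₂ K₁ K₂ : Subgroup G}
    (h₁ : K₁ ≤ H₁ ⊔ center G) (h₂ : K₂ ≤ H₂ ⊔ center G) : ⁅K₁, K₂⁆ ≤ ⁅H₁, H₂⁆ := by
  rw [commutator_le]
  intro g₁ hg₁ g₂ hg₂
  obtain ⟨a, ha, z, hz, rfl⟩ := mem_sup_of_normal_right.mp (h₁ hg₁)
  obtain ⟨b, hb, w, hw, rfl⟩ := mem_sup_of_normal_right.mp (h₂ hg₂)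
  rw [commutatorElement_mul_left_of_mem_center _ _ hz,
    commutatorElement_mul_right_of_mem_center _ _ hw]
  exact commutator_mem_commutator ha hb

end CenterCommutator

/-- Let `H` be a group with center `Z` and `pr : H → H/Z` the canonical
projection. Let `P` and `Q` be subgroups of `H` with `pr(P) ⊇ pr(Q)`. If `Q` has no
nontrivial abelian quotient (i.e. `Q` equals its own commutator subgroup), then `P ⊇ Q`. -/
theorem subgroup_le_of_image_in_center_quotient_le {H : Type*} [Group H] (P Q : Subgroup H)
    (hPQ : Subgroup.map (QuotientGroup.mk' (Subgroup.center H)) Q ≤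
      Subgroup.map (QuotientGroup.mk' (Subgroup.center H)) P)
    (hQ : commutator ↥Q = ⊤) :
    Q ≤ P := by
  have hQZ : Q ≤ P ⊔ center H := by
    simpa only [QuotientGroup.ker_mk'] using map_le_map_iff.mp hPQ
  have hQ_perfect : ⁅Q, Q⁆ = Q := isPerfect_iff.mp (Group.isPerfect_def.mpr hQ)
  calc Q = ⁅Q, Q⁆ := hQ_perfect.symm
    _ ≤ ⁅P, P⁆ := commutator_le_commutator_of_le_sup_center hQZ hQZ
    _ ≤ P := (commutator_le_sup P P).trans (sup_idem P).le
end

section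
/- Let O be an integral domain with fraction field E, and let 𝒯 be a commutative local O-algebra with maximal ideal 𝔪 and residue field κ = 𝒯/𝔪, which is torsion-free as an O-module. Let M be a finitely generated 𝒯-module such that M ⊗_O E is a free module of rank r over 𝒯 ⊗_O E. If M ⊗_𝒯 κ is a κ-vector space of dimension at most r, then M is a free 𝒯-module of rank r. -/
/-!
Lifting a spanning family of the fiber `M ⧸ 𝔪M` of size `r` gives, by Nakayama, a surjection
`φ : 𝒯^r → M`. Torsion-freeness makes the image `S` of `O⁰` consist of nonzerodivisors of `𝒯`,
so `𝒯^r` embeds into `S⁻¹𝒯^r`. After localizing, `φ` becomes a surjection of `S⁻¹𝒯^r` onto the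
free module `S⁻¹M` of the same rank, which is injective (Orzech); hence `φ` is injective.
-/

open Submodule

theorem Submonoid.map_nonZeroDivisors_le_nonZeroDivisors {R A : Type*} [CommRing R] [CommRing A]
    [Algebra R A] [Module.IsTorsionFree R A] :
    (nonZeroDivisors R).map (algebraMap R A) ≤ nonZeroDivisors A := by
  rintro _ ⟨a, ha, rfl⟩
  rw [mem_nonZeroDivisors_iff_right]
  intro x hx
  rw [mul_comm, ← Algebra.smul_def] at hx
  exact (isRegular_iff_mem_nonZeroDivisors.mpr ha).isSMulRegular (hx.trans (smul_zero a).symm)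

theorem exists_fin_span_eq_top_of_rank_le {K V : Type*} [DivisionRing K] [AddCommGroup V]
    [Module K V] {r : ℕ} (h : Module.rank K V ≤ r) :
    ∃ v : Fin r → V, span K (Set.range v) = ⊤ := by
  have : Module.Finite K V := Module.rank_lt_aleph0_iff.mp (h.trans_lt Cardinal.natCast_lt_aleph0)
  have hle : Module.finrank K V ≤ r := Module.finrank_le_of_rank_le h
  let b := Module.finBasis K V
  refine ⟨Function.extend (Fin.castLE hle) b 0, eq_top_iff.mpr ?_⟩
  rw [← b.span_eq]
  refine span_mono (Set.range_subset_iff.mpr fun j => ⟨Fin.castLE hle j, ?_⟩)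
  exact (Fin.castLE_injective hle).extend_apply _ _ j

theorem IsLocalRing.span_eq_top_of_span_mkQ_eq_top {R M ι : Type*} [CommRing R] [IsLocalRing R]
    [AddCommGroup M] [Module R M] [Module.Finite R M] {x : ι → M}
    (hx : span (R ⧸ maximalIdeal R)
      (Set.range ((maximalIdeal R • ⊤ : Submodule R M).mkQ ∘ x)) = ⊤) :
    span R (Set.range x) = ⊤ := by
  rw [← IsLocalRing.map_mkQ_eq_top, map_span, ← Set.range_comp,
    ← restrictScalars_span R _ (Ideal.Quotient.mk_surjective (I := maximalIdeal R)), hx,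
    restrictScalars_top]

theorem LinearMap.injective_of_surjective_of_basis_localizedModule {R M ι : Type*} [CommRing R]
    [AddCommGroup M] [Module R M] [Finite ι] {S : Submonoid R} (hS : S ≤ nonZeroDivisors R)
    (f : (ι →₀ R) →ₗ[R] M) (hf : Function.Surjective f)
    (b : Module.Basis ι (Localization S) (LocalizedModule S M)) : Function.Injective f := by
  let fS := Finsupp.mapRange.linearMap (Algebra.linearMap R (Localization S)) (α := ι)
  let fLoc := IsLocalizedModule.mapExtendScalars S fS (LocalizedModule.mkLinearMap S M)
    (Localization S) f
  have := Module.Finite.of_basis b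
  have hfLoc : Function.Injective fLoc :=
    OrzechProperty.injective_of_surjective_of_injective b.repr.symm.toLinearMap fLoc
      b.repr.symm.injective (IsLocalizedModule.map_surjective S _ _ f hf)
  have hfS : Function.Injective fS :=
    Finsupp.mapRange_injective _ (map_zero _) (IsLocalization.injective _ hS)
  refine Function.Injective.of_comp (f := LocalizedModule.mkLinearMap S M) ?_
  convert hfLoc.comp hfS using 1
  ext z
  exact (IsLocalizedModule.map_apply S fS _ f z).symm

/-- `𝒯 ⊗_O E` and `M ⊗_O E` are realized as localizations at the image of `O⁰` in `𝒯`, and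
`M ⊗_𝒯 κ` as `M ⧸ 𝔪M`. -/
theorem free_of_fiber_dim_le
    (O : Type*) [CommRing O] [IsDomain O]
    (𝒯 : Type*) [CommRing 𝒯] [Algebra O 𝒯] [IsLocalRing 𝒯]
    (htf : ∀ (a : O) (t : 𝒯), a • t = 0 → a = 0 ∨ t = 0)
    (M : Type*) [AddCommGroup M] [Module 𝒯 M] [Module.Finite 𝒯 M]
    (r : ℕ)
    (hfree : Nonempty (Module.Basis (Fin r)
      (Localization (Submonoid.map (algebraMap O 𝒯) (nonZeroDivisors O)))
      (LocalizedModule (Submonoid.map (algebraMap O 𝒯) (nonZeroDivisors O)) M)))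
    (hdim : Module.rank (𝒯 ⧸ IsLocalRing.maximalIdeal 𝒯)
      (M ⧸ ((IsLocalRing.maximalIdeal 𝒯) • ⊤ : Submodule 𝒯 M)) ≤ r) :
    Nonempty (Module.Basis (Fin r) 𝒯 M) := by
  obtain ⟨b⟩ := hfree
  have : Module.IsTorsionFree O 𝒯 := .of_smul_eq_zero htf
  let _ : Field (𝒯 ⧸ IsLocalRing.maximalIdeal 𝒯) := Ideal.Quotient.field _
  obtain ⟨v, hv⟩ := exists_fin_span_eq_top_of_rank_le hdim
  obtain ⟨x, rfl⟩ := (mkQ_surjective _).comp_left v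
  have hsurj : Function.Surjective (Finsupp.linearCombination 𝒯 x) := by
    rw [← LinearMap.range_eq_top, Finsupp.range_linearCombination,
      IsLocalRing.span_eq_top_of_span_mkQ_eq_top hv]
  have hinj := LinearMap.injective_of_surjective_of_basis_localizedModule
    Submonoid.map_nonZeroDivisors_le_nonZeroDivisors _ hsurj b
  exact ⟨.ofRepr (LinearEquiv.ofBijective _ ⟨hinj, hsurj⟩).symm⟩
end

section
/- Let a and b be positive integers, let ι be a nonempty finite set, and let (a_τ)_{τ∈ι} and (b_τ)_{τ∈ι} be families of integers satisfying 0 ≤ 2a_τ < a and 0 ≤ 2b_τ < b for all τ ∈ ι. Suppose that the two multisets, indexed by all subsets J of ι, { Σ_{τ∈J} a_τ + Σ_{τ∈ι∖J} (a − a_τ) : J ⊆ ι } and { Σ_{τ∈J} b_τ + Σ_{τ∈ι∖J} (b − b_τ) : J ⊆ ι } are equal (with multiplicities). Then a = b and the multisets {a_τ : τ ∈ ι} and {b_τ : τ ∈ ι} are equal (with multiplicities). -/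
/-!
With `d τ = a - 2 * A τ > 0`, the value attached to `J` is `∑ τ, (a - A τ) - ∑ τ ∈ J, d τ`, so
the given multiset is the multiset of subset sums of `{d τ}` reflected about `∑ τ, (a - A τ)`,
which is its maximum (attained at `J = ∅`). A multiset of positive elements is determined by its
subset sums: its least element `m` is the least nonzero subset sum, and the subset sums of
`m ::ₘ s` are those of `s` together with their translates by `m`, a doubling that can be
cancelled. So `{a - 2 * A τ} = {b - 2 * B τ}` and `∑ τ, (a - A τ) = ∑ τ, (b - B τ)`; comparing
totals gives `a = b`.
-/

namespace Multiset

variable {α β : Type*}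

theorem powerset_map (f : α → β) (s : Multiset α) :
    (s.map f).powerset = s.powerset.map (map f) := by
  induction s using Multiset.induction with
  | empty => simp
  | cons a s ih => simp [powerset_cons, ih, map_map]

def subsetSums [AddCommMonoid α] (s : Multiset α) : Multiset α :=
  s.powerset.map sum

section AddCommMonoid

variable [AddCommMonoid α]

theorem card_subsetSums (s : Multiset α) : card (subsetSums s) = 2 ^ card s := by
  simp [subsetSums]

theorem zero_mem_subsetSums (s : Multiset α) : (0 : α) ∈ subsetSums s :=
  mem_map.2 ⟨0, zero_mem_powerset s, sum_zero⟩

theorem mem_subsetSums_of_mem {s : Multiset α} {x : α} (hx : x ∈ s) : x ∈ subsetSums s :=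
  mem_map.2 ⟨{x}, mem_powerset.2 (singleton_le.2 hx), sum_singleton x⟩

theorem subsetSums_cons (a : α) (s : Multiset α) :
    subsetSums (a ::ₘ s) = subsetSums s + (subsetSums s).map (a + ·) := by
  simp [subsetSums, powerset_cons, map_map]

end AddCommMonoid

theorem nonneg_of_mem_subsetSums [AddCommMonoid α] [PartialOrder α] [IsOrderedAddMonoid α]
    {s : Multiset α} (hs : ∀ x ∈ s, 0 ≤ x) {y : α} (hy : y ∈ subsetSums s) : 0 ≤ y := by
  obtain ⟨u, hu, rfl⟩ := mem_map.1 hy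
  exact sum_nonneg fun x hx => hs x (mem_of_le (mem_powerset.1 hu) hx)

theorem exists_le_of_mem_subsetSums [AddCommMonoid α] [PartialOrder α] [IsOrderedAddMonoid α]
    {s : Multiset α} (hs : ∀ x ∈ s, 0 ≤ x) {y : α} (hy : y ∈ subsetSums s) (hy0 : y ≠ 0) :
    ∃ x ∈ s, x ≤ y := by
  obtain ⟨u, hu, rfl⟩ := mem_map.1 hy
  have hus : u ≤ s := mem_powerset.1 hu
  obtain ⟨x, hx⟩ := exists_mem_of_ne_zero (by rintro rfl; exact hy0 sum_zero : u ≠ 0)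
  exact ⟨x, mem_of_le hus hx, single_le_sum (fun z hz => hs z (mem_of_le hus hz)) x hx⟩

theorem exists_min_of_ne_zero [LinearOrder α] {s : Multiset α} (hs : s ≠ 0) :
    ∃ m ∈ s, ∀ x ∈ s, m ≤ x := by
  obtain ⟨m, hm, hmin⟩ := s.toFinset.exists_min_image id (toFinset_nonempty.2 hs)
  exact ⟨m, mem_toFinset.1 hm, fun x hx => hmin x (mem_toFinset.2 hx)⟩

section LinearOrder

variable [AddCommMonoid α] [LinearOrder α] [IsOrderedCancelAddMonoid α]

theorem eq_of_add_map_add_eq {m : α} (hm : 0 < m) {U V : Multiset α}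
    (h : U + U.map (m + ·) = V + V.map (m + ·)) : U = V := by
  induction U using Multiset.strongInductionOn generalizing V with
  | ih U ih =>
  rcases eq_or_ne U 0 with rfl | hU
  · have := congrArg card h
    simp only [map_zero, add_zero, card_zero, card_add, card_map] at this
    exact (card_eq_zero.1 (by omega)).symm
  -- the least element `x` of `U` is the least element of `U + U.map (m + ·)`, hence lies in `V`
  obtain ⟨x, hxU, hxmin⟩ := exists_min_of_ne_zero hU
  have hx_le : ∀ y ∈ V + V.map (m + ·), x ≤ y := by
    rw [← h]
    intro y hy
    rcases mem_add.1 hy with hy | hy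
    · exact hxmin y hy
    · obtain ⟨z, hz, rfl⟩ := mem_map.1 hy
      exact (hxmin z hz).trans (le_add_of_nonneg_left hm.le)
  have hxV : x ∈ V := by
    rcases mem_add.1 (h ▸ mem_add.2 (Or.inl hxU) : x ∈ V + V.map (m + ·)) with hx | hx
    · exact hx
    · obtain ⟨y, hy, rfl⟩ := mem_map.1 hx
      exact absurd (hx_le y (mem_add.2 (Or.inl hy))) (not_le.2 (lt_add_of_pos_left y hm))
  rw [← cons_erase hxU, ← cons_erase hxV] at h
  simp only [map_cons, cons_add, add_cons, cons_inj_right] at h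
  rw [← cons_erase hxU, ← cons_erase hxV, ih _ (erase_lt.2 hxU) h]

theorem eq_of_subsetSums_eq {s t : Multiset α} (hs : ∀ x ∈ s, 0 < x) (ht : ∀ x ∈ t, 0 < x)
    (h : subsetSums s = subsetSums t) : s = t := by
  induction s using Multiset.strongInductionOn generalizing t with
  | ih s ih =>
  have hcard : card s = card t := by
    have := congrArg card h
    rw [card_subsetSums, card_subsetSums] at this
    exact Nat.pow_right_injective le_rfl this
  rcases eq_or_ne s 0 with rfl | hs0
  · exact (card_eq_zero.1 hcard.symm).symm
  have ht0 : t ≠ 0 := fun ht0 => hs0 (card_eq_zero.1 (hcard.trans (by rw [ht0, card_zero])))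
  obtain ⟨m, hms, hmin_s⟩ := exists_min_of_ne_zero hs0
  obtain ⟨n, hnt, hmin_t⟩ := exists_min_of_ne_zero ht0
  -- the least element of a positive multiset is its least nonzero subset sum
  have hmn : m = n := by
    obtain ⟨x, hx, hxn⟩ := exists_le_of_mem_subsetSums (fun x hx => (hs x hx).le)
      (h ▸ mem_subsetSums_of_mem hnt) (ht n hnt).ne'
    obtain ⟨y, hy, hym⟩ := exists_le_of_mem_subsetSums (fun x hx => (ht x hx).le)
      (h.symm ▸ mem_subsetSums_of_mem hms) (hs m hms).ne'
    exact le_antisymm ((hmin_s x hx).trans hxn) ((hmin_t y hy).trans hym)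
  subst hmn
  rw [← cons_erase hms, ← cons_erase hnt, subsetSums_cons, subsetSums_cons] at h
  rw [← cons_erase hms, ← cons_erase hnt,
    ih _ (erase_lt.2 hms) (fun x hx => hs x (mem_of_mem_erase hx))
      (fun x hx => ht x (mem_of_mem_erase hx))
      (eq_of_add_map_add_eq (hs m hms) h)]

end LinearOrder

theorem eq_and_eq_of_map_sub_eq [AddCommGroup α] [PartialOrder α] [IsOrderedAddMonoid α]
    {S T : Multiset α} {c d : α} (hS : ∀ x ∈ S, 0 ≤ x) (hT : ∀ x ∈ T, 0 ≤ x)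
    (hS0 : 0 ∈ S) (hT0 : 0 ∈ T) (h : S.map (c - ·) = T.map (d - ·)) : c = d ∧ S = T := by
  have hcd : c = d := by
    have hc : c ∈ T.map (d - ·) := h ▸ mem_map.2 ⟨0, hS0, sub_zero c⟩
    have hd : d ∈ S.map (c - ·) := h.symm ▸ mem_map.2 ⟨0, hT0, sub_zero d⟩
    obtain ⟨y, hy, hyc⟩ := mem_map.1 hc
    obtain ⟨z, hz, hzd⟩ := mem_map.1 hd
    exact le_antisymm (hyc ▸ sub_le_self d (hT y hy)) (hzd ▸ sub_le_self c (hS z hz))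
  subst hcd
  exact ⟨rfl, map_injective sub_right_injective h⟩

end Multiset

open Finset Multiset

theorem Finset.map_sum_powerset_eq_subsetSums {ι α : Type*} [AddCommMonoid α]
    (s : Finset ι) (f : ι → α) :
    s.powerset.val.map (fun J => ∑ τ ∈ J, f τ) = subsetSums (s.val.map f) := by
  rw [subsetSums, powerset_map, Multiset.map_map, Finset.powerset, Multiset.map_pmap]
  exact pmap_eq_map _ (sum ∘ Multiset.map f) _ _

theorem map_sum_add_sum_compl_sub {ι : Type*} [Fintype ι] [DecidableEq ι] (c : ℤ) (A : ι → ℤ) :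
    (univ : Finset (Finset ι)).val.map (fun J => (∑ τ ∈ J, A τ) + ∑ τ ∈ Jᶜ, (c - A τ))
      = (subsetSums (univ.val.map fun τ => c - 2 * A τ)).map (∑ τ, (c - A τ) - ·) := by
  rw [← powerset_univ, ← map_sum_powerset_eq_subsetSums, Multiset.map_map]
  refine Multiset.map_congr rfl fun J _ => ?_
  rw [Function.comp_apply, ← sum_add_sum_compl J fun τ => c - A τ]
  simp only [sum_sub_distrib, ← mul_sum]
  ring

theorem weights_eq_of_multiset_eq_general
    {ι : Type*} [Fintype ι] [DecidableEq ι] [Nonempty ι]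
    (a b : ℤ)
    (A B : ι → ℤ)
    (hA : ∀ τ, 0 ≤ 2 * A τ ∧ 2 * A τ < a)
    (hB : ∀ τ, 0 ≤ 2 * B τ ∧ 2 * B τ < b)
    (h : Multiset.map
        (fun J : Finset ι => (∑ τ ∈ J, A τ) + ∑ τ ∈ Jᶜ, (a - A τ))
        (Finset.univ : Finset (Finset ι)).val
      = Multiset.map
        (fun J : Finset ι => (∑ τ ∈ J, B τ) + ∑ τ ∈ Jᶜ, (b - B τ))
        (Finset.univ : Finset (Finset ι)).val) :
    a = b ∧ Multiset.map A (Finset.univ : Finset ι).val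
      = Multiset.map B (Finset.univ : Finset ι).val := by
  have gaps_pos : ∀ (c : ℤ) (C : ι → ℤ), (∀ τ, 2 * C τ < c) →
      ∀ x ∈ univ.val.map fun τ => c - 2 * C τ, 0 < x := by
    intro c C hC x hx
    obtain ⟨τ, -, rfl⟩ := Multiset.mem_map.1 hx
    linarith [hC τ]
  have hdA := gaps_pos a A fun τ => (hA τ).2
  have hdB := gaps_pos b B fun τ => (hB τ).2
  rw [map_sum_add_sum_compl_sub, map_sum_add_sum_compl_sub] at h
  obtain ⟨hmax, hsums⟩ := eq_and_eq_of_map_sub_eq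
    (fun _ hx => nonneg_of_mem_subsetSums (fun x hx => (hdA x hx).le) hx)
    (fun _ hx => nonneg_of_mem_subsetSums (fun x hx => (hdB x hx).le) hx)
    (zero_mem_subsetSums _) (zero_mem_subsetSums _) h
  have hgaps := eq_of_subsetSums_eq hdA hdB hsums
  have hab : a = b := by
    have hsum := congrArg Multiset.sum hgaps
    simp only [← Finset.sum_eq_multiset_sum, sum_sub_distrib, ← mul_sum, sum_const,
      card_univ, nsmul_eq_mul] at hsum hmax
    have hn : (Fintype.card ι : ℤ) ≠ 0 := by exact_mod_cast Fintype.card_ne_zero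
    exact mul_left_cancel₀ hn (by linarith)
  subst hab
  refine ⟨rfl, map_injective (f := fun x => a - 2 * x) (fun x y hxy => by simpa using hxy) ?_⟩
  simpa only [Multiset.map_map, Function.comp_def] using hgaps

/-- Let `a, b` be positive integers, `ι` a nonempty finite set, and
`(A τ)`, `(B τ)` integers with `0 ≤ 2 A τ < a` and `0 ≤ 2 B τ < b`. If the multisets
`{ Σ_{τ∈J} A τ + Σ_{τ∉J} (a − A τ) : J ⊆ ι }` and
`{ Σ_{τ∈J} B τ + Σ_{τ∉J} (b − B τ) : J ⊆ ι }` (indexed by all subsets `J` of `ι`, with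
multiplicities) are equal, then `a = b` and the multisets `{A τ}` and `{B τ}` are equal. -/
theorem weights_eq_of_multiset_eq
    {ι : Type*} [Fintype ι] [DecidableEq ι] [Nonempty ι]
    (a b : ℤ) (ha : 0 < a) (hb : 0 < b)
    (A B : ι → ℤ)
    (hA : ∀ τ, 0 ≤ 2 * A τ ∧ 2 * A τ < a)
    (hB : ∀ τ, 0 ≤ 2 * B τ ∧ 2 * B τ < b)
    (h : Multiset.map
        (fun J : Finset ι => (∑ τ ∈ J, A τ) + ∑ τ ∈ Jᶜ, (a - A τ))
        (Finset.univ : Finset (Finset ι)).val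
      = Multiset.map
        (fun J : Finset ι => (∑ τ ∈ J, B τ) + ∑ τ ∈ Jᶜ, (b - B τ))
        (Finset.univ : Finset (Finset ι)).val) :
    a = b ∧ Multiset.map A (Finset.univ : Finset ι).val
      = Multiset.map B (Finset.univ : Finset ι).val :=
  weights_eq_of_multiset_eq_general a b A B hA hB h
end

section
/- Let p be a prime number, h ≥ 1 an integer, and a₀, …, a_{h−1} integers with 1 ≤ a_i ≤ p − 1 for all i. Suppose that for every j ∈ {0, …, h−1} there exists an integer n with 1 ≤ n ≤ 5 such that p^h − 1 divides n · Σ_{i=0}^{h−1} p^i · a_{(i+j) mod h}. Then 5 · Σ_{i=0}^{h−1} a_i ≥ h(p − 1). -/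
lemma geom_aux (p : ℕ) (hp : 2 ≤ p) : ∀ n : ℕ, (p - 1) * ∑ i ∈ Finset.range n, p ^ i = p ^ n - 1 := by
  intro n
  induction n with
  | zero => simp
  | succ n ih =>
    rw [Finset.sum_range_succ, Nat.mul_add, ih, pow_succ]
    have h1 : 1 ≤ p ^ n := Nat.one_le_pow _ _ (by omega)
    have h2 : p ^ n ≤ p ^ n * p := Nat.le_mul_of_pos_right _ (by omega)
    rw [Nat.sub_mul, one_mul]
    have h3 : p ^ n ≤ p * p ^ n := Nat.le_mul_of_pos_left _ (by omega)
    rw [mul_comm p (p^n)] at h3 ⊢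
    omega

/-- Let `p` be a prime, `h ≥ 1`, and `a₀, …, a_{h−1}` integers with
`1 ≤ a i ≤ p − 1`. If for every `j ∈ {0, …, h−1}` there is an integer `1 ≤ n ≤ 5` such that
`p^h − 1` divides `n · Σ_{i<h} p^i · a_{(i+j) mod h}`, then
`5 · Σ_{i<h} a i ≥ h (p − 1)`. -/
theorem five_mul_sum_ge_of_small_order
    (p : ℕ) (hp : p.Prime) (h : ℕ) (hh : 1 ≤ h)
    (a : ℕ → ℕ) (ha : ∀ i < h, 1 ≤ a i ∧ a i ≤ p - 1)
    (hdvd : ∀ j < h, ∃ n : ℕ, 1 ≤ n ∧ n ≤ 5 ∧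
      (p ^ h - 1) ∣ n * ∑ i ∈ Finset.range h, p ^ i * a ((i + j) % h)) :
    5 * ∑ i ∈ Finset.range h, a i ≥ h * (p - 1) := by
  have hp2 : 2 ≤ p := hp.two_le
  set G := ∑ i ∈ Finset.range h, p ^ i with hG
  have hgeom : (p - 1) * G = p ^ h - 1 := geom_aux p hp2 h
  set S : ℕ → ℕ := fun j => ∑ i ∈ Finset.range h, p ^ i * a ((i + j) % h) with hS
  -- S j ≥ 1
  have hSpos : ∀ j, 1 ≤ S j := by
    intro j
    have h0 : (0 : ℕ) ∈ Finset.range h := Finset.mem_range.mpr hh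
    have : p ^ 0 * a ((0 + j) % h) ≤ S j :=
      Finset.single_le_sum (f := fun i => p ^ i * a ((i + j) % h)) (fun i _ => Nat.zero_le _) h0
    have ha1 : 1 ≤ a ((0 + j) % h) := (ha _ (Nat.mod_lt _ (by omega))).1
    simpa using le_trans (by simpa using ha1) this
  -- S j ≤ p^h - 1
  have hSle : ∀ j, S j ≤ p ^ h - 1 := by
    intro j
    have : S j ≤ ∑ i ∈ Finset.range h, p ^ i * (p - 1) := by
      apply Finset.sum_le_sum
      intro i _
      exact Nat.mul_le_mul_left _ (ha _ (Nat.mod_lt _ (by omega))).2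
    rw [← Finset.sum_mul, mul_comm] at this
    rwa [hgeom] at this
  -- 5 * S j ≥ p^h - 1
  have hS5 : ∀ j < h, p ^ h - 1 ≤ 5 * S j := by
    intro j hj
    obtain ⟨n, hn1, hn5, hd⟩ := hdvd j hj
    have hpos : 0 < n * S j := Nat.mul_pos hn1 (hSpos j)
    have := Nat.le_of_dvd hpos hd
    calc p ^ h - 1 ≤ n * S j := this
      _ ≤ 5 * S j := Nat.mul_le_mul_right _ hn5
  -- sum identity
  have hsum : ∑ j ∈ Finset.range h, S j = G * ∑ i ∈ Finset.range h, a i := by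
    simp only [hS]
    rw [Finset.sum_comm]
    rw [Finset.sum_mul]
    apply Finset.sum_congr rfl
    intro i hi
    rw [← Finset.mul_sum]
    congr 1
    have hi' : i < h := Finset.mem_range.mp hi
    apply Finset.sum_nbij' (fun j => (i + j) % h) (fun j => (j + (h - i)) % h)
    · intro j hj; exact Finset.mem_range.mpr (Nat.mod_lt _ (by omega))
    · intro j hj; exact Finset.mem_range.mpr (Nat.mod_lt _ (by omega))
    · intro j hj
      have hj' : j < h := Finset.mem_range.mp hj
      rw [Nat.mod_add_mod]
      have : i + j + (h - i) = j + h := by omega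
      rw [this, Nat.add_mod_right, Nat.mod_eq_of_lt hj']
    · intro j hj
      have hj' : j < h := Finset.mem_range.mp hj
      rw [Nat.add_mod_mod]
      have : i + (j + (h - i)) = j + h := by omega
      rw [this, Nat.add_mod_right, Nat.mod_eq_of_lt hj']
    · intro j hj; rfl
  -- combine
  have hmain : h * (p ^ h - 1) ≤ 5 * (G * ∑ i ∈ Finset.range h, a i) := by
    rw [← hsum, Finset.mul_sum]
    calc h * (p ^ h - 1) = ∑ _j ∈ Finset.range h, (p ^ h - 1) := by
          rw [Finset.sum_const, Finset.card_range, smul_eq_mul]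
      _ ≤ ∑ j ∈ Finset.range h, 5 * S j :=
          Finset.sum_le_sum (fun j hj => hS5 j (Finset.mem_range.mp hj))
  rw [← hgeom] at hmain
  have hGpos : 0 < G := by
    calc 0 < p ^ 0 := Nat.one_le_pow _ _ (by omega)
      _ ≤ G := Finset.single_le_sum (f := fun i => p ^ i) (fun i _ => Nat.zero_le _)
          (Finset.mem_range.mpr hh)
  have : h * ((p - 1) * G) = (h * (p - 1)) * G := by ring
  rw [this] at hmain
  have : 5 * (G * ∑ i ∈ Finset.range h, a i) = (5 * ∑ i ∈ Finset.range h, a i) * G := by ring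
  rw [this] at hmain
  exact Nat.le_of_mul_le_mul_right hmain hGpos
end
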